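/- In the cyclic market of Example 6 (n students, n colleges, cyclic preferences, each college capacity 1, total capacity n−1), every nonwasteful matching assigns each student s_i with i ≠ j (for the unique unmatched student s_j) to her most preferred college, and consequently the unmatched student has justified envy toward exactly n−1 students. -/

import Mathlib

/- The cyclic market of Example 6, with `n + 1` students `s_0, …, s_n` and
`n + 1` colleges `c_0, …, c_n` (indices modulo `n + 1`).
Student `s_i` ranks colleges by `rankS`: her `r`-th choice is `c_{i+1+r}`
(so `c_{i+1}` is best and `c_i` is worst); college `c_i` ranks students by
`rankC`: its best student is `s_i` and its worst is `s_{i-1}`.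
Smaller rank means more preferred. -/

def rankS {n : ℕ} (i c : Fin (n + 1)) : ℕ := (c - i - 1).val

def rankC {n : ℕ} (i s : Fin (n + 1)) : ℕ := (s - i).val

/-- Feasibility: each college accepts at most one student and at most
`n = (n+1) - 1` students are matched in total. -/
def FeasCyc {n : ℕ} (μ : Fin (n + 1) → Option (Fin (n + 1))) : Prop :=
  (∀ s s' c, μ s = some c → μ s' = some c → s = s') ∧
    (Finset.univ.filter (fun s => μ s ≠ none)).card ≤ n

/-- `c ≻ₛ μ(s)`: student `s` prefers college `c` to her current assignment
(all colleges are acceptable to all students). -/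
def POverCyc {n : ℕ} (μ : Fin (n + 1) → Option (Fin (n + 1))) (s c : Fin (n + 1)) : Prop :=
  μ s = none ∨ ∃ c', μ s = some c' ∧ rankS s c < rankS s c'

/-- Nonwastefulness: no student claims an empty seat. -/
def NWCyc {n : ℕ} (μ : Fin (n + 1) → Option (Fin (n + 1))) : Prop :=
  ∀ s c, ¬ (POverCyc μ s c ∧ FeasCyc (Function.update μ s (some c)))

/-- `s` has justified envy toward `t`. -/
def EnvyCyc {n : ℕ} (μ : Fin (n + 1) → Option (Fin (n + 1))) (s t : Fin (n + 1)) : Prop :=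
  ∃ c, μ t = some c ∧ POverCyc μ s c ∧ rankC c s < rankC c t

/-! At most `n` students are matched, so some student `j` is unmatched and some college `c₀` is
vacant. Nonwastefulness rules out a second unmatched student (she could take a vacant seat) and
makes every matched student prefer her seat to `c₀`; since `c₀` is the first choice of `c₀ - 1`,
that student is `j`, i.e. `c₀ = j + 1`. Measure a student `s` by `s - j` and a college `c` by
`c - 1 - j`: each student `s ≠ j` then sits at a college of measure at least her own, and
sending `j` to `c₀` makes the seat assignment a bijection, so summing shows all these
inequalities are equalities, i.e. `μ s = s + 1`. -/

theorem Function.Injective.comp_eq_of_le_comp {α M : Type*} [Fintype α] [AddCommMonoid M]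
    [PartialOrder M] [IsOrderedCancelAddMonoid M] {f : α → α} (hf : Function.Injective f)
    {g : α → M} (hle : g ≤ g ∘ f) : g ∘ f = g := by
  have hsum : ∑ a, g a = ∑ a, g (f a) :=
    (Equiv.sum_comp (Equiv.ofBijective f hf.bijective_of_finite) g).symm
  funext a
  exact ((Finset.sum_eq_sum_iff_of_le fun a _ => hle a).1 hsum a (Finset.mem_univ a)).symm

theorem Fin.val_le_of_val_sub_le_val_neg {n : ℕ} {x y : Fin (n + 1)} (hy : y ≠ 0)
    (h : (y - x).val ≤ (-x).val) : x.val ≤ y.val := by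
  by_contra! hlt
  have hx : x ≠ 0 := by rintro rfl; exact Nat.not_lt_zero _ hlt
  have hsub := Fin.coe_sub_iff_lt.2 (Fin.lt_def.2 hlt)
  have hy' := Fin.pos_iff_ne_zero.2 hy
  rw [Fin.val_neg, if_neg hx] at h
  omega

section CyclicMarket

open Finset

variable {n : ℕ}

theorem rankS_eq_zero_iff {i c : Fin (n + 1)} : rankS i c = 0 ↔ c = i + 1 := by
  rw [rankS, Fin.val_eq_zero_iff, sub_sub, sub_eq_zero]

theorem rankC_lt_rankC_sub_one {i s : Fin (n + 1)} (hs : s ≠ i - 1) :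
    rankC i s < rankC i (i - 1) := by
  have hlast : i - 1 - i = Fin.last n := by
    rw [sub_sub_cancel_left, eq_comm, ← neg_eq_iff_eq_neg, Fin.neg_last]
  rw [rankC, rankC, hlast, ← Fin.lt_def, Fin.lt_last_iff_ne_last, ← hlast]
  exact fun h => hs (sub_left_injective h)

theorem val_sub_le_val_sub_of_rankS_le {s c k : Fin (n + 1)} (hc : c ≠ k + 1)
    (h : rankS s c ≤ rankS s (k + 1)) : (s - k).val ≤ (c - 1 - k).val := by
  have hy : c - 1 - k ≠ 0 := by
    rwa [sub_sub, sub_ne_zero, add_comm 1 k]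
  refine Fin.val_le_of_val_sub_le_val_neg hy ?_
  have e1 : c - 1 - k - (s - k) = c - s - 1 := by abel
  have e2 : -(s - k) = k + 1 - s - 1 := by abel
  rwa [e1, e2]

variable {μ : Fin (n + 1) → Option (Fin (n + 1))}

def Vacant (μ : Fin (n + 1) → Option (Fin (n + 1))) (c : Fin (n + 1)) : Prop :=
  ∀ t, μ t ≠ some c

theorem exists_vacant (h : (univ.filter fun s => μ s ≠ none).card < n + 1) :
    ∃ c, Vacant μ c := by
  by_contra! hocc
  simp only [Vacant, not_forall, not_not] at hocc
  choose f hf using hocc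
  have hcard := card_le_card_of_injOn f (s := univ) (t := univ.filter fun s => μ s ≠ none)
    (fun c _ => by simp [hf c])
    (fun a _ b _ hab => Option.some_injective _ ((hf a).symm.trans (hab ▸ hf b)))
  simp only [card_univ, Fintype.card_fin] at hcard
  omega

theorem filter_update_ne_none (s c : Fin (n + 1)) :
    (univ.filter fun t => Function.update μ s (some c) t ≠ none) =
      insert s (univ.filter fun t => μ t ≠ none) := by
  ext t
  rcases eq_or_ne t s with rfl | hts <;> simp [*]

theorem FeasCyc.update (hμ : FeasCyc μ) {s c : Fin (n + 1)} (hc : Vacant μ c)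
    (hcard : (insert s (univ.filter fun t => μ t ≠ none)).card ≤ n) :
    FeasCyc (Function.update μ s (some c)) := by
  refine ⟨fun t t' d ht ht' => ?_, by rwa [filter_update_ne_none]⟩
  rw [Function.update_apply] at ht ht'
  split_ifs at ht ht' with hts ht's
  · exact hts.trans ht's.symm
  · exact absurd (ht'.trans ht.symm) (hc t')
  · exact absurd (ht.trans ht'.symm) (hc t)
  · exact hμ.1 t t' d ht ht'

theorem FeasCyc.exists_eq_none (hμ : FeasCyc μ) : ∃ j, μ j = none := by
  obtain ⟨j, -, hj⟩ := exists_mem_notMem_of_card_lt_card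
    (s := univ.filter fun s => μ s ≠ none) (t := univ)
    (by rw [card_univ, Fintype.card_fin]; exact Nat.lt_succ_of_le hμ.2)
  exact ⟨j, by simpa using hj⟩

theorem NWCyc.exists_eq_some_of_ne (hnw : NWCyc μ) (hμ : FeasCyc μ) {j s : Fin (n + 1)}
    (hj : μ j = none) (hsj : s ≠ j) : ∃ c, μ s = some c := by
  rw [← Option.ne_none_iff_exists']
  intro hs
  set M := univ.filter fun t => μ t ≠ none
  have hM : M ⊂ univ.erase j := by
    refine (ssubset_iff_of_subset fun t ht => ?_).2 ⟨s, by simp [hsj], by simp [M, hs]⟩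
    exact mem_erase.2 ⟨fun h => (mem_filter.1 ht).2 (h ▸ hj), mem_univ t⟩
  have hMcard := card_lt_card hM
  rw [card_erase_of_mem (mem_univ j), card_univ, Fintype.card_fin] at hMcard
  obtain ⟨c, hc⟩ := exists_vacant (μ := μ) (show M.card < n + 1 by omega)
  exact hnw s c ⟨Or.inl hs, hμ.update hc ((card_insert_le s M).trans (by omega))⟩

theorem NWCyc.rankS_le_of_vacant (hnw : NWCyc μ) (hμ : FeasCyc μ) {s c c₀ : Fin (n + 1)}
    (hc₀ : Vacant μ c₀) (hs : μ s = some c) : rankS s c ≤ rankS s c₀ := by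
  by_contra! hlt
  refine hnw s c₀ ⟨Or.inr ⟨c, hs, hlt⟩, hμ.update hc₀ ?_⟩
  rw [insert_eq_of_mem (by simp [hs])]
  exact hμ.2

theorem NWCyc.vacant_eq_add_one (hnw : NWCyc μ) (hμ : FeasCyc μ) {j c₀ : Fin (n + 1)}
    (hj : μ j = none) (hc₀ : Vacant μ c₀) : c₀ = j + 1 := by
  by_contra hne
  obtain ⟨c, hc⟩ := hnw.exists_eq_some_of_ne hμ hj (s := c₀ - 1)
    fun h => hne (by rw [← h, sub_add_cancel])
  have h0 := hnw.rankS_le_of_vacant hμ hc₀ hc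
  rw [rankS_eq_zero_iff.2 (sub_add_cancel c₀ 1).symm, Nat.le_zero, rankS_eq_zero_iff,
    sub_add_cancel] at h0
  exact hc₀ _ (h0 ▸ hc)

theorem FeasCyc.getD_injective (hμ : FeasCyc μ) {c₀ : Fin (n + 1)} (hc₀ : Vacant μ c₀)
    {j : Fin (n + 1)} (hnone : ∀ s, μ s = none → s = j) :
    Function.Injective fun s => (μ s).getD c₀ := by
  intro a b hab
  cases ha : μ a <;> cases hb : μ b <;>
    simp only [ha, hb, Option.getD_none, Option.getD_some] at hab
  · exact (hnone a ha).trans (hnone b hb).symm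
  · exact absurd (hab ▸ hb) (hc₀ b)
  · exact absurd (hab ▸ ha) (hc₀ a)
  · exact hμ.1 a b _ ha (hab ▸ hb)

theorem NWCyc.eq_some_add_one (hnw : NWCyc μ) (hμ : FeasCyc μ) {j : Fin (n + 1)}
    (hj : μ j = none) (hvac : Vacant μ (j + 1)) {s : Fin (n + 1)} (hsj : s ≠ j) :
    μ s = some (s + 1) := by
  have hmatched : ∀ t, t ≠ j → ∃ c, μ t = some c := fun t => hnw.exists_eq_some_of_ne hμ hj
  have hnone : ∀ t, μ t = none → t = j := fun t ht => by_contra fun htj => by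
    obtain ⟨c, hc⟩ := hmatched t htj
    simp [hc] at ht
  set σ : Fin (n + 1) → Fin (n + 1) := fun t => (μ t).getD (j + 1) - 1
  have hσ : Function.Injective σ :=
    sub_left_injective.comp (hμ.getD_injective hvac hnone)
  have hle : (fun t => (t - j).val) ≤ (fun t => (t - j).val) ∘ σ := by
    intro t
    rcases eq_or_ne t j with rfl | htj
    · simp [σ, hj]
    · obtain ⟨c, hc⟩ := hmatched t htj
      simpa [σ, hc] using val_sub_le_val_sub_of_rankS_le (fun h => hvac t (h ▸ hc))
        (hnw.rankS_le_of_vacant hμ hvac hc)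
  obtain ⟨c, hc⟩ := hmatched s hsj
  have hs := congrFun (hσ.comp_eq_of_le_comp hle) s
  simp only [Function.comp_apply, σ, hc, Option.getD_some] at hs
  rw [hc, sub_eq_iff_eq_add.1 (sub_left_injective (Fin.ext hs))]

theorem setOf_envyCyc_eq {j : Fin (n + 1)} (hj : μ j = none)
    (hshift : ∀ s, s ≠ j → μ s = some (s + 1)) : {t | EnvyCyc μ j t} = {j}ᶜ := by
  ext t
  simp only [Set.mem_ofPred_eq, Set.mem_compl_singleton_iff]
  constructor
  · rintro ⟨c, htc, -, -⟩ rfl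
    simp [hj] at htc
  · intro htj
    refine ⟨t + 1, hshift t htj, Or.inl hj, ?_⟩
    have := rankC_lt_rankC_sub_one (i := t + 1) (s := j) (by rwa [add_sub_cancel_right, ne_comm])
    rwa [add_sub_cancel_right] at this

end CyclicMarket

theorem stmt12_general (n : ℕ) (μ : Fin (n + 1) → Option (Fin (n + 1)))
    (hfeas : FeasCyc μ) (hnw : NWCyc μ) :
    ∃ j, μ j = none ∧ (∀ s, s ≠ j → μ s = some (s + 1)) ∧
      Set.ncard {t | EnvyCyc μ j t} = n := by
  obtain ⟨j, hj⟩ := hfeas.exists_eq_none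
  obtain ⟨c₀, hc₀⟩ := exists_vacant (Nat.lt_succ_of_le hfeas.2)
  obtain rfl := hnw.vacant_eq_add_one hfeas hj hc₀
  have hshift : ∀ s, s ≠ j → μ s = some (s + 1) := fun s => hnw.eq_some_add_one hfeas hj hc₀
  refine ⟨j, hj, hshift, ?_⟩
  rw [setOf_envyCyc_eq hj hshift, Set.ncard_compl, Set.ncard_singleton, Nat.card_eq_fintype_card,
    Fintype.card_fin, Nat.add_sub_cancel]

/-- In the cyclic market with `n + 1 ≥ 2` students, every feasible nonwasteful
matching assigns each matched student `s_i` (i.e. each student other than the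
unique unmatched student `s_j`) to her most preferred college `c_{i+1}`, and
consequently the unmatched student has justified envy toward exactly `n`
students (all others). -/
theorem stmt12 (n : ℕ) (hn : 1 ≤ n) (μ : Fin (n + 1) → Option (Fin (n + 1)))
    (hfeas : FeasCyc μ) (hnw : NWCyc μ) :
    ∃ j, μ j = none ∧ (∀ s, s ≠ j → μ s = some (s + 1)) ∧
      Set.ncard {t | EnvyCyc μ j t} = n :=
  stmt12_general n μ hfeas hnw
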